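/- The infinite binary word q = g(p) contains no palindromic factor of length greater than 15. -/

import Mathlib

/-- The finite block of length `n` occurring at position `i` in the infinite word `x`. -/
def FactorAt {A : Type*} (x : ℕ → A) (i n : ℕ) : List A :=
  (List.range n).map fun t => x (i + t)

/-- `w` is a (finite) factor of the infinite word `x`. -/
def IsFactor {A : Type*} (x : ℕ → A) (w : List A) : Prop :=
  ∃ i, w = FactorAt x i w.length

/-- Factor complexity of an infinite word: the number of distinct factors of length `n`. -/
noncomputable def complexity {A : Type*} (x : ℕ → A) (n : ℕ) : ℕ :=
  Set.ncard {w : List A | w.length = n ∧ IsFactor x w}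

/-- Factor complexity of a finite word: the number of distinct factors of length `n`. -/
noncomputable def complexityF {A : Type*} (z : List A) (n : ℕ) : ℕ :=
  Set.ncard {w : List A | w.length = n ∧ w <:+: z}

/-- `p` is a period of the finite word `y`:  `1 ≤ p ≤ |y|` and `y[j] = y[j+p]`
for all `0 ≤ j < |y| - p`. -/
def HasPeriod {A : Type*} [Inhabited A] (y : List A) (p : ℕ) : Prop :=
  1 ≤ p ∧ p ≤ y.length ∧ ∀ j, j + p < y.length → y.getD j default = y.getD (j + p) default

/-- The smallest period of a finite word. -/
noncomputable def minPeriod {A : Type*} [Inhabited A] (y : List A) : ℕ :=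
  sInf {p | HasPeriod y p}

/-- The exponent of a finite word: its length divided by its smallest period. -/
noncomputable def exponent {A : Type*} [Inhabited A] (y : List A) : ℚ :=
  (y.length : ℚ) / (minPeriod y : ℚ)

/-- The critical exponent of an infinite word: the supremum of the exponents of its
nonempty finite factors. -/
noncomputable def criticalExponent {A : Type*} [Inhabited A] (x : ℕ → A) : ENNReal :=
  sSup {e : ENNReal | ∃ w, IsFactor x w ∧ w ≠ [] ∧ e = ENNReal.ofReal ((exponent w : ℚ) : ℝ)}

/-- The image of a finite word under a morphism given by its action on letters. -/
def mapWord {k : ℕ} {A : Type*} (σ : Fin k → List A) (w : List (Fin k)) : List A :=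
  (w.map σ).flatten

/-- The image of an infinite word under a (nonerasing) morphism given by its action on
letters: the `n`-th letter of the concatenation `σ (x 0) ++ σ (x 1) ++ ⋯`. -/
def applyMorph {k : ℕ} {A : Type*} [Inhabited A] (σ : Fin k → List A) (x : ℕ → Fin k) :
    ℕ → A :=
  fun n => (((List.range (n + 1)).map fun i => σ (x i)).flatten).getD n default

/-- The morphism `h` with `h(0) = 01`, `h(1) = 21`, `h(2) = 0`. -/
def hm : Fin 3 → List (Fin 3) := ![[0, 1], [2, 1], [0]]

/-- The morphism `g` with `g(0) = 011`, `g(1) = 0`, `g(2) = 01`. -/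
def gm : Fin 3 → List (Fin 2) := ![[0, 1, 1], [0], [0, 1]]

/-- The abelian complexity of a binary infinite word at `n`: the number of distinct
values taken by the count of `0`'s among its length-`n` factors. -/
noncomputable def abelianComplexity (x : ℕ → Fin 2) (n : ℕ) : ℕ :=
  Set.ncard {z : ℕ | ∃ i, z = (FactorAt x i n).count 0}

def PREF : List (Fin 3) := [0, 1, 2, 1, 0, 2, 1, 0, 1, 0, 2, 1, 0, 1, 2, 1, 0]

def SS : List (List (Fin 3)) :=
  [[0, 1, 2, 1, 0, 2, 1, 0, 1, 0, 2, 1, 0, 1, 2, 1, 0],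
   [1, 2, 1, 0, 2, 1, 0, 1, 0, 2, 1, 0, 1, 2, 1, 0, 1],
   [2, 1, 0, 2, 1, 0, 1, 0, 2, 1, 0, 1, 2, 1, 0, 1, 0],
   [1, 0, 2, 1, 0, 1, 0, 2, 1, 0, 1, 2, 1, 0, 1, 0, 2],
   [0, 2, 1, 0, 1, 0, 2, 1, 0, 1, 2, 1, 0, 1, 0, 2, 1],
   [2, 1, 0, 1, 0, 2, 1, 0, 1, 2, 1, 0, 1, 0, 2, 1, 0],
   [1, 0, 1, 0, 2, 1, 0, 1, 2, 1, 0, 1, 0, 2, 1, 0, 1],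
   [0, 1, 0, 2, 1, 0, 1, 2, 1, 0, 1, 0, 2, 1, 0, 1, 2],
   [1, 0, 2, 1, 0, 1, 2, 1, 0, 1, 0, 2, 1, 0, 1, 2, 1],
   [0, 2, 1, 0, 1, 2, 1, 0, 1, 0, 2, 1, 0, 1, 2, 1, 0],
   [2, 1, 0, 1, 2, 1, 0, 1, 0, 2, 1, 0, 1, 2, 1, 0, 2],
   [1, 0, 1, 2, 1, 0, 1, 0, 2, 1, 0, 1, 2, 1, 0, 2, 1],
   [0, 1, 2, 1, 0, 1, 0, 2, 1, 0, 1, 2, 1, 0, 2, 1, 0],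
   [1, 2, 1, 0, 1, 0, 2, 1, 0, 1, 2, 1, 0, 2, 1, 0, 1],
   [2, 1, 0, 1, 0, 2, 1, 0, 1, 2, 1, 0, 2, 1, 0, 1, 2],
   [1, 0, 1, 0, 2, 1, 0, 1, 2, 1, 0, 2, 1, 0, 1, 2, 1],
   [0, 1, 0, 2, 1, 0, 1, 2, 1, 0, 2, 1, 0, 1, 2, 1, 0],
   [1, 0, 2, 1, 0, 1, 2, 1, 0, 2, 1, 0, 1, 2, 1, 0, 1],
   [0, 2, 1, 0, 1, 2, 1, 0, 2, 1, 0, 1, 2, 1, 0, 1, 0],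
   [2, 1, 0, 1, 2, 1, 0, 2, 1, 0, 1, 2, 1, 0, 1, 0, 2],
   [1, 0, 1, 2, 1, 0, 2, 1, 0, 1, 2, 1, 0, 1, 0, 2, 1],
   [0, 1, 2, 1, 0, 2, 1, 0, 1, 2, 1, 0, 1, 0, 2, 1, 0],
   [1, 2, 1, 0, 2, 1, 0, 1, 2, 1, 0, 1, 0, 2, 1, 0, 1],
   [2, 1, 0, 2, 1, 0, 1, 2, 1, 0, 1, 0, 2, 1, 0, 1, 2],
   [2, 1, 0, 1, 0, 2, 1, 0, 1, 2, 1, 0, 2, 1, 0, 1, 0],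
   [1, 0, 1, 0, 2, 1, 0, 1, 2, 1, 0, 2, 1, 0, 1, 0, 2],
   [0, 1, 0, 2, 1, 0, 1, 2, 1, 0, 2, 1, 0, 1, 0, 2, 1],
   [1, 0, 2, 1, 0, 1, 2, 1, 0, 2, 1, 0, 1, 0, 2, 1, 0],
   [0, 2, 1, 0, 1, 2, 1, 0, 2, 1, 0, 1, 0, 2, 1, 0, 1],
   [2, 1, 0, 1, 2, 1, 0, 2, 1, 0, 1, 0, 2, 1, 0, 1, 2],
   [1, 0, 1, 2, 1, 0, 2, 1, 0, 1, 0, 2, 1, 0, 1, 2, 1],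
   [1, 2, 1, 0, 2, 1, 0, 1, 0, 2, 1, 0, 1, 2, 1, 0, 2],
   [2, 1, 0, 2, 1, 0, 1, 0, 2, 1, 0, 1, 2, 1, 0, 2, 1],
   [1, 0, 2, 1, 0, 1, 0, 2, 1, 0, 1, 2, 1, 0, 2, 1, 0],
   [0, 2, 1, 0, 1, 0, 2, 1, 0, 1, 2, 1, 0, 2, 1, 0, 1]]

def pre {k : ℕ} {A : Type*} (σ : Fin k → List A) (x : ℕ → Fin k) (j : ℕ) : List A :=
  mapWord σ ((List.range j).map x)

lemma factorAt_length {A : Type*} (x : ℕ → A) (i n : ℕ) : (FactorAt x i n).length = n := by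
  simp [FactorAt]

lemma mapWord_append {k : ℕ} {A : Type*} (σ : Fin k → List A) (l1 l2 : List (Fin k)) :
    mapWord σ (l1 ++ l2) = mapWord σ l1 ++ mapWord σ l2 := by
  simp [mapWord]

lemma length_mapWord_ge {k : ℕ} {A : Type*} (σ : Fin k → List A)
    (hσ : ∀ a, 1 ≤ (σ a).length) (l : List (Fin k)) : l.length ≤ (mapWord σ l).length := by
  induction l with
  | nil => simp [mapWord]
  | cons a l ih =>
    have : mapWord σ (a :: l) = σ a ++ mapWord σ l := by simp [mapWord]
    rw [this]
    simp only [List.length_cons, List.length_append]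
    have := hσ a
    omega

lemma factorAt_add {A : Type*} (x : ℕ → A) (i a b : ℕ) :
    FactorAt x i (a + b) = FactorAt x i a ++ FactorAt x (i + a) b := by
  rw [FactorAt, List.range_add, List.map_append, List.map_map]
  congr 1
  apply List.map_congr_left
  intro t _
  simp [Function.comp, Nat.add_assoc]


lemma pre_add {k : ℕ} {A : Type*} (σ : Fin k → List A) (x : ℕ → Fin k) (a b : ℕ) :
    pre σ x (a + b) = pre σ x a ++ mapWord σ (FactorAt x a b) := by
  rw [pre, pre, List.range_add, List.map_append, mapWord_append]
  congr 2
  rw [FactorAt, List.map_map]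
  simp [Function.comp]

lemma length_pre_ge {k : ℕ} {A : Type*} (σ : Fin k → List A) (x : ℕ → Fin k)
    (hσ : ∀ a, 1 ≤ (σ a).length) (j : ℕ) : j ≤ (pre σ x j).length := by
  have := length_mapWord_ge σ hσ ((List.range j).map x)
  simpa [pre] using this

lemma getD_pre_of_le {k : ℕ} {A : Type*} [Inhabited A] (σ : Fin k → List A) (x : ℕ → Fin k)
    {a b n : ℕ} (hab : a ≤ b) (hn : n < (pre σ x a).length) :
    (pre σ x b).getD n default = (pre σ x a).getD n default := by
  obtain ⟨c, rfl⟩ := Nat.exists_eq_add_of_le hab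
  rw [pre_add]
  exact List.getD_append _ _ _ _ hn

lemma applyMorph_eq_pre {k : ℕ} {A : Type*} [Inhabited A] (σ : Fin k → List A)
    (hσ : ∀ a, 1 ≤ (σ a).length) (x : ℕ → Fin k) (K n : ℕ)
    (h : n < (pre σ x K).length) :
    applyMorph σ x n = (pre σ x K).getD n default := by
  have base : applyMorph σ x n = (pre σ x (n + 1)).getD n default := by
    simp only [applyMorph, pre, mapWord, List.map_map, Function.comp_def]
  rcases le_total K (n + 1) with hK | hK
  · exact base.trans (getD_pre_of_le σ x hK h)
  · have hn' : n < (pre σ x (n + 1)).length :=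
      lt_of_lt_of_le (Nat.lt_succ_self n) (length_pre_ge σ x hσ (n + 1))
    exact base.trans (getD_pre_of_le σ x hK hn').symm

lemma factor_pullback {k : ℕ} {A : Type*} [Inhabited A] (σ : Fin k → List A)
    (hσ : ∀ a, 1 ≤ (σ a).length) (x : ℕ → Fin k) (i : ℕ) :
    ∃ j, (pre σ x j).length ≤ i ∧ i < (pre σ x (j + 1)).length ∧
      i - (pre σ x j).length + 17 ≤ (mapWord σ (FactorAt x j 17)).length ∧
      FactorAt (applyMorph σ x) i 17 =
        ((mapWord σ (FactorAt x j 17)).drop (i - (pre σ x j).length)).take 17 := by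
  have Cmono : ∀ a b : ℕ, (pre σ x a).length + b ≤ (pre σ x (a + b)).length := by
    intro a b
    have h1 := length_mapWord_ge σ hσ (FactorAt x a b)
    rw [factorAt_length] at h1
    rw [pre_add, List.length_append]
    omega
  have C0 : (pre σ x 0).length = 0 := by simp [pre, mapWord]
  obtain ⟨j, hj1, hj2⟩ : ∃ j, (pre σ x j).length ≤ i ∧ i < (pre σ x (j + 1)).length := by
    refine ⟨Nat.findGreatest (fun j => (pre σ x j).length ≤ i) i, ?_, ?_⟩
    · exact Nat.findGreatest_spec (P := fun j => (pre σ x j).length ≤ i) (Nat.zero_le i) (show (pre σ x 0).length ≤ i by rw [C0]; exact Nat.zero_le i)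
    · by_contra hcon
      push_neg at hcon
      have hub : Nat.findGreatest (fun j => (pre σ x j).length ≤ i) i + 1 ≤ i := by
        have := Cmono 0 (Nat.findGreatest (fun j => (pre σ x j).length ≤ i) i + 1)
        simp only [Nat.zero_add] at this
        omega
      exact Nat.findGreatest_is_greatest (Nat.lt_succ_self _) hub hcon
  have hsplit : pre σ x (j + 17) = pre σ x j ++ mapWord σ (FactorAt x j 17) := pre_add σ x j 17
  have hzlen : (pre σ x (j + 17)).length = (pre σ x j).length + (mapWord σ (FactorAt x j 17)).length := by
    rw [hsplit, List.length_append]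
  have him : i + 17 ≤ (pre σ x (j + 17)).length := by
    have := Cmono (j + 1) 16
    have h17 : j + 1 + 16 = j + 17 := by omega
    rw [h17] at this
    omega
  have hdz : i - (pre σ x j).length + 17 ≤ (mapWord σ (FactorAt x j 17)).length := by omega
  refine ⟨j, hj1, hj2, hdz, ?_⟩
  apply List.ext_getElem
  · rw [factorAt_length]
    simp only [List.length_take, List.length_drop]
    omega
  · intro s hs1 hs2
    rw [factorAt_length] at hs1
    have hL : FactorAt (applyMorph σ x) i 17 = (List.range 17).map fun t => applyMorph σ x (i + t) := rfl
    have lhs : (FactorAt (applyMorph σ x) i 17)[s] = applyMorph σ x (i + s) := by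
      simp [FactorAt]
    refine lhs.trans ?_
    have hbound : i + s < (pre σ x (j + 17)).length := by omega
    rw [applyMorph_eq_pre σ hσ x (j + 17) (i + s) hbound, hsplit]
    have hge : (pre σ x j).length ≤ i + s := by omega
    rw [List.getD_append_right _ _ _ _ hge]
    have hidx : i + s - (pre σ x j).length = i - (pre σ x j).length + s := by omega
    rw [hidx]
    have hlt : i - (pre σ x j).length + s < (mapWord σ (FactorAt x j 17)).length := by omega
    rw [List.getD_eq_getElem _ _ hlt]
    simp [List.getElem_take, List.getElem_drop]

lemma length_pre_add_le {k : ℕ} {A : Type*} (σ : Fin k → List A)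
    (hσ : ∀ a, 1 ≤ (σ a).length) (x : ℕ → Fin k) (a b : ℕ) :
    (pre σ x a).length + b ≤ (pre σ x (a + b)).length := by
  have h1 := length_mapWord_ge σ hσ (FactorAt x a b)
  rw [factorAt_length] at h1
  rw [pre_add, List.length_append]
  omega

lemma factorAt_take {A : Type*} (x : ℕ → A) (i a b : ℕ) :
    (FactorAt x i (a + b)).take a = FactorAt x i a := by
  rw [factorAt_add]
  exact List.take_left' (factorAt_length x i a)

lemma hm_ne : ∀ a, 1 ≤ (hm a).length := by decide
lemma gm_ne : ∀ a, 1 ≤ (gm a).length := by decide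
lemma prefS : PREF ∈ SS := by decide
set_option maxRecDepth 10000 in
lemma lenSh : ∀ w ∈ SS, (mapWord hm w).length ≤ 34 := by decide
set_option maxRecDepth 10000 in
lemma lenSg : ∀ w ∈ SS, (mapWord gm w).length ≤ 51 := by decide
set_option maxRecDepth 10000 in
lemma closureOK : ∀ w ∈ SS, ∀ d < 35,
    (((mapWord hm w).drop d).take 17).length = 17 → ((mapWord hm w).drop d).take 17 ∈ SS := by
  decide
set_option maxRecDepth 20000 in
lemma noPal : ∀ w ∈ SS, ∀ d < 52, ∀ L ∈ [16, 17],
    (((mapWord gm w).drop d).take L).length = L →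
    (((mapWord gm w).drop d).take L).reverse ≠ ((mapWord gm w).drop d).take L := by
  decide

/-- The word `q = g(p)` contains no palindromic factor of length greater than `15`. -/
theorem stmt11 (p : ℕ → Fin 3) (hp0 : p 0 = 0) (hpfix : applyMorph hm p = p) :
    ∀ w : List (Fin 2), IsFactor (applyMorph gm p) w → w.reverse = w → w.length ≤ 15 := by
  classical
    have E1 : (List.range 1).map p = [0] := by simp [List.range_succ, hp0]
    have e1 : p 1 = 1 := by
      have hb : (1 : ℕ) < (pre hm p 1).length := by
        simp only [pre]; rw [E1]; decide
      have h1 : p 1 = (pre hm p 1).getD 1 default := by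
        conv_lhs => rw [← hpfix]
        exact applyMorph_eq_pre hm hm_ne p 1 1 hb
      simp only [pre] at h1; rw [E1] at h1; rw [h1]; decide
    have E2 : (List.range 2).map p = [0, 1] := by
      rw [List.range_succ, List.map_append, E1]; simp [e1]
    have e2 : p 2 = 2 := by
      have hb : (2 : ℕ) < (pre hm p 2).length := by
        simp only [pre]; rw [E2]; decide
      have h1 : p 2 = (pre hm p 2).getD 2 default := by
        conv_lhs => rw [← hpfix]
        exact applyMorph_eq_pre hm hm_ne p 2 2 hb
      simp only [pre] at h1; rw [E2] at h1; rw [h1]; decide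
    have E3 : (List.range 3).map p = [0, 1, 2] := by
      rw [List.range_succ, List.map_append, E2]; simp [e2]
    have e3 : p 3 = 1 := by
      have hb : (3 : ℕ) < (pre hm p 3).length := by
        simp only [pre]; rw [E3]; decide
      have h1 : p 3 = (pre hm p 3).getD 3 default := by
        conv_lhs => rw [← hpfix]
        exact applyMorph_eq_pre hm hm_ne p 3 3 hb
      simp only [pre] at h1; rw [E3] at h1; rw [h1]; decide
    have E4 : (List.range 4).map p = [0, 1, 2, 1] := by
      rw [List.range_succ, List.map_append, E3]; simp [e3]
    have e4 : p 4 = 0 := by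
      have hb : (4 : ℕ) < (pre hm p 4).length := by
        simp only [pre]; rw [E4]; decide
      have h1 : p 4 = (pre hm p 4).getD 4 default := by
        conv_lhs => rw [← hpfix]
        exact applyMorph_eq_pre hm hm_ne p 4 4 hb
      simp only [pre] at h1; rw [E4] at h1; rw [h1]; decide
    have E5 : (List.range 5).map p = [0, 1, 2, 1, 0] := by
      rw [List.range_succ, List.map_append, E4]; simp [e4]
    have e5 : p 5 = 2 := by
      have hb : (5 : ℕ) < (pre hm p 5).length := by
        simp only [pre]; rw [E5]; decide
      have h1 : p 5 = (pre hm p 5).getD 5 default := by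
        conv_lhs => rw [← hpfix]
        exact applyMorph_eq_pre hm hm_ne p 5 5 hb
      simp only [pre] at h1; rw [E5] at h1; rw [h1]; decide
    have E6 : (List.range 6).map p = [0, 1, 2, 1, 0, 2] := by
      rw [List.range_succ, List.map_append, E5]; simp [e5]
    have e6 : p 6 = 1 := by
      have hb : (6 : ℕ) < (pre hm p 6).length := by
        simp only [pre]; rw [E6]; decide
      have h1 : p 6 = (pre hm p 6).getD 6 default := by
        conv_lhs => rw [← hpfix]
        exact applyMorph_eq_pre hm hm_ne p 6 6 hb
      simp only [pre] at h1; rw [E6] at h1; rw [h1]; decide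
    have E7 : (List.range 7).map p = [0, 1, 2, 1, 0, 2, 1] := by
      rw [List.range_succ, List.map_append, E6]; simp [e6]
    have e7 : p 7 = 0 := by
      have hb : (7 : ℕ) < (pre hm p 7).length := by
        simp only [pre]; rw [E7]; decide
      have h1 : p 7 = (pre hm p 7).getD 7 default := by
        conv_lhs => rw [← hpfix]
        exact applyMorph_eq_pre hm hm_ne p 7 7 hb
      simp only [pre] at h1; rw [E7] at h1; rw [h1]; decide
    have E8 : (List.range 8).map p = [0, 1, 2, 1, 0, 2, 1, 0] := by
      rw [List.range_succ, List.map_append, E7]; simp [e7]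
    have e8 : p 8 = 1 := by
      have hb : (8 : ℕ) < (pre hm p 8).length := by
        simp only [pre]; rw [E8]; decide
      have h1 : p 8 = (pre hm p 8).getD 8 default := by
        conv_lhs => rw [← hpfix]
        exact applyMorph_eq_pre hm hm_ne p 8 8 hb
      simp only [pre] at h1; rw [E8] at h1; rw [h1]; decide
    have E9 : (List.range 9).map p = [0, 1, 2, 1, 0, 2, 1, 0, 1] := by
      rw [List.range_succ, List.map_append, E8]; simp [e8]
    have e9 : p 9 = 0 := by
      have hb : (9 : ℕ) < (pre hm p 9).length := by
        simp only [pre]; rw [E9]; decide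
      have h1 : p 9 = (pre hm p 9).getD 9 default := by
        conv_lhs => rw [← hpfix]
        exact applyMorph_eq_pre hm hm_ne p 9 9 hb
      simp only [pre] at h1; rw [E9] at h1; rw [h1]; decide
    have E10 : (List.range 10).map p = [0, 1, 2, 1, 0, 2, 1, 0, 1, 0] := by
      rw [List.range_succ, List.map_append, E9]; simp [e9]
    have e10 : p 10 = 2 := by
      have hb : (10 : ℕ) < (pre hm p 10).length := by
        simp only [pre]; rw [E10]; decide
      have h1 : p 10 = (pre hm p 10).getD 10 default := by
        conv_lhs => rw [← hpfix]
        exact applyMorph_eq_pre hm hm_ne p 10 10 hb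
      simp only [pre] at h1; rw [E10] at h1; rw [h1]; decide
    have E11 : (List.range 11).map p = [0, 1, 2, 1, 0, 2, 1, 0, 1, 0, 2] := by
      rw [List.range_succ, List.map_append, E10]; simp [e10]
    have e11 : p 11 = 1 := by
      have hb : (11 : ℕ) < (pre hm p 11).length := by
        simp only [pre]; rw [E11]; decide
      have h1 : p 11 = (pre hm p 11).getD 11 default := by
        conv_lhs => rw [← hpfix]
        exact applyMorph_eq_pre hm hm_ne p 11 11 hb
      simp only [pre] at h1; rw [E11] at h1; rw [h1]; decide
    have E12 : (List.range 12).map p = [0, 1, 2, 1, 0, 2, 1, 0, 1, 0, 2, 1] := by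
      rw [List.range_succ, List.map_append, E11]; simp [e11]
    have e12 : p 12 = 0 := by
      have hb : (12 : ℕ) < (pre hm p 12).length := by
        simp only [pre]; rw [E12]; decide
      have h1 : p 12 = (pre hm p 12).getD 12 default := by
        conv_lhs => rw [← hpfix]
        exact applyMorph_eq_pre hm hm_ne p 12 12 hb
      simp only [pre] at h1; rw [E12] at h1; rw [h1]; decide
    have E13 : (List.range 13).map p = [0, 1, 2, 1, 0, 2, 1, 0, 1, 0, 2, 1, 0] := by
      rw [List.range_succ, List.map_append, E12]; simp [e12]
    have e13 : p 13 = 1 := by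
      have hb : (13 : ℕ) < (pre hm p 13).length := by
        simp only [pre]; rw [E13]; decide
      have h1 : p 13 = (pre hm p 13).getD 13 default := by
        conv_lhs => rw [← hpfix]
        exact applyMorph_eq_pre hm hm_ne p 13 13 hb
      simp only [pre] at h1; rw [E13] at h1; rw [h1]; decide
    have E14 : (List.range 14).map p = [0, 1, 2, 1, 0, 2, 1, 0, 1, 0, 2, 1, 0, 1] := by
      rw [List.range_succ, List.map_append, E13]; simp [e13]
    have e14 : p 14 = 2 := by
      have hb : (14 : ℕ) < (pre hm p 14).length := by
        simp only [pre]; rw [E14]; decide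
      have h1 : p 14 = (pre hm p 14).getD 14 default := by
        conv_lhs => rw [← hpfix]
        exact applyMorph_eq_pre hm hm_ne p 14 14 hb
      simp only [pre] at h1; rw [E14] at h1; rw [h1]; decide
    have E15 : (List.range 15).map p = [0, 1, 2, 1, 0, 2, 1, 0, 1, 0, 2, 1, 0, 1, 2] := by
      rw [List.range_succ, List.map_append, E14]; simp [e14]
    have e15 : p 15 = 1 := by
      have hb : (15 : ℕ) < (pre hm p 15).length := by
        simp only [pre]; rw [E15]; decide
      have h1 : p 15 = (pre hm p 15).getD 15 default := by
        conv_lhs => rw [← hpfix]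
        exact applyMorph_eq_pre hm hm_ne p 15 15 hb
      simp only [pre] at h1; rw [E15] at h1; rw [h1]; decide
    have E16 : (List.range 16).map p = [0, 1, 2, 1, 0, 2, 1, 0, 1, 0, 2, 1, 0, 1, 2, 1] := by
      rw [List.range_succ, List.map_append, E15]; simp [e15]
    have e16 : p 16 = 0 := by
      have hb : (16 : ℕ) < (pre hm p 16).length := by
        simp only [pre]; rw [E16]; decide
      have h1 : p 16 = (pre hm p 16).getD 16 default := by
        conv_lhs => rw [← hpfix]
        exact applyMorph_eq_pre hm hm_ne p 16 16 hb
      simp only [pre] at h1; rw [E16] at h1; rw [h1]; decide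
    have E17 : (List.range 17).map p = PREF := by
      rw [show (17:ℕ) = 16+1 from rfl, List.range_succ, List.map_append, E16]; simp [e16, PREF]
  have hpref : FactorAt p 0 17 = PREF := by
    rw [← E17, FactorAt]
    apply List.map_congr_left
    intro t _
    simp
  have pfactS : ∀ i, FactorAt p i 17 ∈ SS := by
    intro i
    induction i using Nat.strong_induction_on with
    | _ i ih =>
      rcases Nat.eq_zero_or_pos i with rfl | hi
      · rw [hpref]; exact prefS
      · obtain ⟨j, hj1, hj2, hdz, heq⟩ := factor_pullback hm hm_ne p i
        rw [hpfix] at heq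
        have hji : j < i := by
          rcases Nat.eq_zero_or_pos j with rfl | hj
          · omega
          · have h2 : (pre hm p 1).length = 2 := by
              simp only [pre]
              rw [E1]
              decide
            have h3 := length_pre_add_le hm hm_ne p 1 (j - 1)
            rw [show 1 + (j - 1) = j by omega] at h3
            omega
        have hwS : FactorAt p j 17 ∈ SS := ih j hji
        have hd35 : i - (pre hm p j).length < 35 := by
          have := lenSh _ hwS
          omega
        have hlen17 :
            (((mapWord hm (FactorAt p j 17)).drop (i - (pre hm p j).length)).take 17).length
              = 17 := by
          rw [← heq, factorAt_length]
        rw [heq]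
        exact closureOK _ hwS _ hd35 hlen17
  rintro w ⟨i, hw⟩ hpal
  by_contra hbig
  push_neg at hbig
  obtain ⟨d, L, hL, hnd⟩ : ∃ d L, (L = 16 ∨ L = 17) ∧ w.length = d + (L + d) := by
    rcases Nat.even_or_odd w.length with ⟨t, ht⟩ | ⟨t, ht⟩
    · exact ⟨t - 8, 16, Or.inl rfl, by omega⟩
    · exact ⟨t - 8, 17, Or.inr rfl, by omega⟩
  rw [hnd, factorAt_add, factorAt_add] at hw
  have hVpal : (FactorAt (applyMorph gm p) (i + d) L).reverse
      = FactorAt (applyMorph gm p) (i + d) L := by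
    have h1 : (FactorAt (applyMorph gm p) (i + d + L) d).reverse ++
        ((FactorAt (applyMorph gm p) (i + d) L).reverse ++
         (FactorAt (applyMorph gm p) i d).reverse)
        = FactorAt (applyMorph gm p) i d ++
          (FactorAt (applyMorph gm p) (i + d) L ++
           FactorAt (applyMorph gm p) (i + d + L) d) := by
      conv_rhs => rw [← hw, ← hpal]
      rw [hw]
      simp [List.reverse_append, List.append_assoc]
    have h2 := List.append_inj h1 (by simp [factorAt_length])
    have h3 := List.append_inj h2.2 (by simp [factorAt_length])
    exact h3.1
  obtain ⟨j, hj1, hj2, hdz, heq⟩ := factor_pullback gm gm_ne p (i + d)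
  have hwS := pfactS j
  have hVt : FactorAt (applyMorph gm p) (i + d) L
      = (FactorAt (applyMorph gm p) (i + d) 17).take L := by
    rcases hL with rfl | rfl
    · rw [show (17 : ℕ) = 16 + 1 from rfl, factorAt_take]
    · exact (List.take_of_length_le (by rw [factorAt_length])).symm
  have hVslice : FactorAt (applyMorph gm p) (i + d) L
      = ((mapWord gm (FactorAt p j 17)).drop (i + d - (pre gm p j).length)).take L := by
    rw [hVt, heq, List.take_take]
    congr 1
    rcases hL with rfl | rfl <;> rfl
  have hd52 : i + d - (pre gm p j).length < 52 := by
    have := lenSg _ hwS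
    omega
  have hVlen :
      (((mapWord gm (FactorAt p j 17)).drop (i + d - (pre gm p j).length)).take L).length
        = L := by
    rw [← hVslice, factorAt_length]
  exact noPal _ hwS _ hd52 L (by rcases hL with rfl | rfl <;> simp) hVlen
    (by rw [← hVslice]; exact hVpal)
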